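/- The vector fields L0 = ∂_Y − λ(∂_T + H_Y ∂_X) and L1 = ∂_X − λ(∂_Y + H_X ∂_X) commute for all λ if and only if H satisfies the hyper-CR equation H_{XT} − H_{YY} + H_Y H_{XX} − H_X H_{XY} = 0. -/

import Mathlib

noncomputable section

abbrev Pt3 := Fin 3 → ℝ

/-- Partial derivative in the `j`-th coordinate direction. -/
def pd (j : Fin 3) (f : Pt3 → ℝ) (p : Pt3) : ℝ :=
  fderiv ℝ f p (Pi.single j 1)

/-- Lie bracket of vector fields on ℝ³. -/
def lieB (X Y : Pt3 → Pt3) (p : Pt3) : Pt3 :=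
  fun i => ∑ j, (X p j * pd j (fun q => Y q i) p - Y p j * pd j (fun q => X q i) p)

/-- The hyper-CR expression H_{XT} − H_{YY} + H_Y H_{XX} − H_X H_{XY};
coordinates (X,Y,T) = (0,1,2). -/
def hyperCR (H : Pt3 → ℝ) (p : Pt3) : ℝ :=
  pd 0 (fun q => pd 2 H q) p - pd 1 (fun q => pd 1 H q) p
    + pd 1 H p * pd 0 (fun q => pd 0 H q) p
    - pd 0 H p * pd 0 (fun q => pd 1 H q) p

/-- L0 = ∂_Y − λ(∂_T + H_Y ∂_X), coordinates (X,Y,T)=(0,1,2). -/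
def L0 (H : Pt3 → ℝ) (lam : ℝ) (p : Pt3) : Pt3 :=
  ![-(lam * pd 1 H p), 1, -lam]

/-- L1 = ∂_X − λ(∂_Y + H_X ∂_X). -/
def L1 (H : Pt3 → ℝ) (lam : ℝ) (p : Pt3) : Pt3 :=
  ![1 - lam * pd 0 H p, -lam, 0]

lemma pd_const' (j : Fin 3) (c : ℝ) (p : Pt3) : pd j (fun _ => c) p = 0 := by
  simp [pd]

lemma pd_const_sub_mul (j : Fin 3) (g : Pt3 → ℝ) (hg : Differentiable ℝ g) (a c : ℝ)
    (p : Pt3) : pd j (fun q => a - c * g q) p = -(c * pd j g p) := by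
  have h := (((hg p).hasFDerivAt.const_mul c).const_sub a).fderiv
  simp [pd, h]

lemma pd_neg_mul (j : Fin 3) (g : Pt3 → ℝ) (hg : Differentiable ℝ g) (c : ℝ)
    (p : Pt3) : pd j (fun q => -(c * g q)) p = -(c * pd j g p) := by
  have h := ((hg p).hasFDerivAt.const_mul c).neg.fderiv
  simp [pd, h, ((hg p).hasFDerivAt.const_mul c).fderiv]

lemma pd_diff (H : Pt3 → ℝ) (hH : ContDiff ℝ (⊤ : ℕ∞) H) (i : Fin 3) :
    Differentiable ℝ (fun q => pd i H q) := by
  have h1 : ContDiff ℝ (⊤ : ℕ∞) (fderiv ℝ H) := hH.fderiv_right (by simp)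
  exact (h1.clm_apply contDiff_const).differentiable (by simp)

lemma pd_comm (H : Pt3 → ℝ) (hH : ContDiff ℝ (⊤ : ℕ∞) H) (i j : Fin 3) (p : Pt3) :
    pd i (fun q => pd j H q) p = pd j (fun q => pd i H q) p := by
  have h1 : ContDiff ℝ (⊤ : ℕ∞) (fderiv ℝ H) := hH.fderiv_right (by simp)
  have h2 : DifferentiableAt ℝ (fderiv ℝ H) p := (h1.differentiable (by simp)) p
  have e : ∀ i j : Fin 3, pd i (fun q => pd j H q) p
      = fderiv ℝ (fderiv ℝ H) p (Pi.single i 1) (Pi.single j 1) := fun i j => by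
    simp [pd, fderiv_clm_apply h2 (differentiableAt_const _)]
  rw [e, e]
  exact second_derivative_symmetric (fun y => ((hH.differentiable (by simp)) y).hasFDerivAt)
    h2.hasFDerivAt _ _

lemma lieB_eval (H : Pt3 → ℝ) (hH : ContDiff ℝ (⊤ : ℕ∞) H) (lam : ℝ) (p : Pt3) :
    lieB (L0 H lam) (L1 H lam) p = ![lam ^ 2 * hyperCR H p, 0, 0] := by
  have hd := pd_diff H hH
  funext i
  fin_cases i
  · show (∑ j, _) = _
    rw [Fin.sum_univ_three]
    simp only [L0, L1, Fin.zero_eta, Fin.mk_one, Fin.reduceFinMk, Matrix.cons_val_zero,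
      Matrix.cons_val_one, Matrix.head_cons, Matrix.cons_val_two, Matrix.tail_cons]
    rw [pd_const_sub_mul 0 _ (hd 0) 1 lam, pd_const_sub_mul 1 _ (hd 0) 1 lam,
      pd_const_sub_mul 2 _ (hd 0) 1 lam, pd_neg_mul 0 _ (hd 1) lam,
      pd_neg_mul 1 _ (hd 1) lam, pd_neg_mul 2 _ (hd 1) lam,
      pd_comm H hH 1 0, pd_comm H hH 2 0]
    simp only [hyperCR]
    ring
  · show (∑ j, _) = _
    rw [Fin.sum_univ_three]
    simp only [L0, L1, Fin.zero_eta, Fin.mk_one, Fin.reduceFinMk, Matrix.cons_val_zero,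
      Matrix.cons_val_one, Matrix.head_cons, Matrix.cons_val_two, Matrix.tail_cons]
    rw [show (fun q : Pt3 => -lam) = (fun _ : Pt3 => -lam) from rfl]
    simp [pd_const']
  · show (∑ j, _) = _
    rw [Fin.sum_univ_three]
    simp only [L0, L1, Fin.zero_eta, Fin.mk_one, Fin.reduceFinMk, Matrix.cons_val_zero,
      Matrix.cons_val_one, Matrix.head_cons, Matrix.cons_val_two, Matrix.tail_cons]
    simp [pd_const']

theorem stmt5 (H : Pt3 → ℝ) (hH : ContDiff ℝ (⊤ : ℕ∞) H) :
    (∀ lam : ℝ, ∀ p : Pt3, lieB (L0 H lam) (L1 H lam) p = 0) ↔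
      (∀ p : Pt3, hyperCR H p = 0) := by
  constructor
  · intro h p
    have h1 := congrFun (h 1 p) 0
    rw [lieB_eval H hH 1 p] at h1
    simpa using h1
  · intro h lam p
    rw [lieB_eval H hH lam p, h p]
    funext i
    fin_cases i <;> simp
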